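/- arXiv:1405.6192 — 3 statements merged into one kernel-verified Lean document; each statement's English description precedes it below -/
import Mathlib

section
/- Let p, q > 0 and let μ be a positive Borel measure on the unit ball 𝔹ₙ of ℂⁿ. If the quantity sup_{z∈𝔹ₙ} ∫_{𝔹ₙ} (1-|z|²)^{nq} / |1 - ⟨z,ω⟩|^{n(p+q)} dμ(ω) is finite, then μ is a p-Carleson measure, i.e., there is a constant C such that μ(Q_r(ζ)) ≤ C r^{np} for every ζ ∈ 𝕊ₙ and 0 < r < 1. -/
open Metric MeasureTheory

noncomputable section

instance {n : ℕ} : MeasurableSpace (EuclideanSpace ℂ (Fin n)) := borel _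
instance {n : ℕ} : BorelSpace (EuclideanSpace ℂ (Fin n)) := ⟨rfl⟩


/-- The Carleson tube `Q_r(ζ) = {z ∈ 𝔹ₙ : |1 - ⟨z,ζ⟩| < r}`. -/
def carlesonTube {n : ℕ} (ζ : EuclideanSpace ℂ (Fin n)) (r : ℝ) :
    Set (EuclideanSpace ℂ (Fin n)) :=
  {z ∈ ball (0 : EuclideanSpace ℂ (Fin n)) 1 | ‖1 - (inner ℂ ζ z : ℂ)‖ < r}

/-!
Test the hypothesis, with bound `M`, at the point `z = (1 - r) ζ`. For `ω ∈ Q_r(ζ)` the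
numerator satisfies `1 - |z|² ≥ r` and the denominator `|1 - ⟨ω, z⟩| ≤ 2r`, so the kernel is at least
`r^{nq} / (2r)^{n(p+q)} = (2^{n(p+q)} r^{np})⁻¹` on the tube. Integrating this lower bound over
the tube gives `μ(Q_r(ζ)) ≤ 2^{n(p+q)} M r^{np}`.
-/

open scoped InnerProductSpace

theorem MeasureTheory.measure_le_ofReal_mul_of_inv_le_of_setLIntegral_le
    {α : Type*} [MeasurableSpace α] {μ : Measure α} {s t : Set α}
    (hs : MeasurableSet s) (hst : s ⊆ t) {f : α → ℝ} {c M : ℝ} (hc : 0 < c)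
    (hf : ∀ x ∈ s, c⁻¹ ≤ f x) (hM : ∫⁻ x in t, ENNReal.ofReal (f x) ∂μ ≤ ENNReal.ofReal M) :
    μ s ≤ ENNReal.ofReal (M * c) := by
  have hc' : ENNReal.ofReal c⁻¹ ≠ 0 := by simpa using hc
  have key : μ s * ENNReal.ofReal c⁻¹ ≤ ENNReal.ofReal M :=
    calc μ s * ENNReal.ofReal c⁻¹ = ∫⁻ _ in s, ENNReal.ofReal c⁻¹ ∂μ := by
          rw [setLIntegral_const, mul_comm]
      _ ≤ ∫⁻ x in s, ENNReal.ofReal (f x) ∂μ :=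
          setLIntegral_mono' hs fun x hx => ENNReal.ofReal_le_ofReal (hf x hx)
      _ ≤ ∫⁻ x in t, ENNReal.ofReal (f x) ∂μ := lintegral_mono_set hst
      _ ≤ ENNReal.ofReal M := hM
  rw [← ENNReal.le_div_iff_mul_le (Or.inl hc') (Or.inl ENNReal.ofReal_ne_top)] at key
  rwa [ENNReal.ofReal_inv_of_pos hc, div_eq_mul_inv, inv_inv, ← ENNReal.ofReal_mul' hc.le] at key

section UnitBall

variable {E : Type*} [NormedAddCommGroup E] [InnerProductSpace ℂ E]

theorem norm_one_sub_inner_comm (x y : E) : ‖1 - ⟪x, y⟫_ℂ‖ = ‖1 - ⟪y, x⟫_ℂ‖ := by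
  rw [← inner_conj_symm x y, ← Complex.norm_conj, map_sub, map_one, Complex.conj_conj]

theorem norm_one_sub_inner_pos {x y : E} (h : ‖x‖ * ‖y‖ < 1) : 0 < ‖1 - ⟪x, y⟫_ℂ‖ := by
  have h₁ := norm_sub_norm_le (1 : ℂ) ⟪x, y⟫_ℂ
  have h₂ := norm_inner_le_norm (𝕜 := ℂ) x y
  rw [norm_one] at h₁
  linarith

theorem norm_one_sub_inner_smul_le {ζ ω : E} (hζ : ‖ζ‖ ≤ 1) (hω : ‖ω‖ ≤ 1) {r : ℝ} (hr : 0 ≤ r)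
    (hζω : ‖1 - ⟪ζ, ω⟫_ℂ‖ < r) : ‖1 - ⟪ω, ((1 - r : ℝ) : ℂ) • ζ⟫_ℂ‖ ≤ 2 * r := by
  have hu : ‖⟪ω, ζ⟫_ℂ‖ ≤ 1 :=
    (norm_inner_le_norm ω ζ).trans (mul_le_one₀ hω (norm_nonneg ζ) hζ)
  rw [norm_one_sub_inner_comm] at hζω
  have hsplit : 1 - ⟪ω, ((1 - r : ℝ) : ℂ) • ζ⟫_ℂ = (1 - ⟪ω, ζ⟫_ℂ) + (r : ℂ) * ⟪ω, ζ⟫_ℂ := by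
    rw [inner_smul_right]; push_cast; ring
  calc ‖1 - ⟪ω, ((1 - r : ℝ) : ℂ) • ζ⟫_ℂ‖ ≤ ‖1 - ⟪ω, ζ⟫_ℂ‖ + r * ‖⟪ω, ζ⟫_ℂ‖ := by
        rw [hsplit]
        refine (norm_add_le _ _).trans_eq ?_
        rw [norm_mul, Complex.norm_real, Real.norm_of_nonneg hr]
    _ ≤ 2 * r := by nlinarith

theorem inv_two_rpow_mul_rpow_le_kernel {a b r : ℝ} (hab : 0 ≤ a + b) (hb : 0 ≤ b) (hr : 0 < r)
    (hr1 : r ≤ 1) {ζ ω : E} (hζ : ‖ζ‖ ≤ 1) (hω : ‖ω‖ < 1) (hζω : ‖1 - ⟪ζ, ω⟫_ℂ‖ < r) :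
    (2 ^ (a + b) * r ^ a)⁻¹ ≤
      (1 - ‖((1 - r : ℝ) : ℂ) • ζ‖ ^ 2) ^ b / ‖1 - ⟪ω, ((1 - r : ℝ) : ℂ) • ζ⟫_ℂ‖ ^ (a + b) := by
  set z : E := ((1 - r : ℝ) : ℂ) • ζ
  have hz : ‖z‖ ≤ 1 - r := by
    rw [norm_smul, Complex.norm_real, Real.norm_of_nonneg (by linarith)]
    exact mul_le_of_le_one_right (by linarith) hζ
  have hnum : r ≤ 1 - ‖z‖ ^ 2 := by nlinarith [norm_nonneg z]
  have hden : 0 < ‖1 - ⟪ω, z⟫_ℂ‖ :=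
    norm_one_sub_inner_pos (by nlinarith [norm_nonneg ω, norm_nonneg z])
  calc (2 ^ (a + b) * r ^ a)⁻¹ = r ^ b / (2 * r) ^ (a + b) := by
        rw [Real.mul_rpow zero_le_two hr.le, Real.rpow_add hr]
        field_simp
    _ ≤ (1 - ‖z‖ ^ 2) ^ b / ‖1 - ⟪ω, z⟫_ℂ‖ ^ (a + b) :=
        div_le_div₀ (Real.rpow_nonneg (hr.le.trans hnum) b) (Real.rpow_le_rpow hr.le hnum hb) (by positivity)
          (Real.rpow_le_rpow hden.le (norm_one_sub_inner_smul_le hζ hω.le hr.le hζω) hab)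

end UnitBall

theorem carlesonTube_subset_ball {n : ℕ} (ζ : EuclideanSpace ℂ (Fin n)) (r : ℝ) :
    carlesonTube ζ r ⊆ ball 0 1 :=
  fun _ h => h.1

theorem measurableSet_carlesonTube {n : ℕ} (ζ : EuclideanSpace ℂ (Fin n)) (r : ℝ) :
    MeasurableSet (carlesonTube ζ r) :=
  measurableSet_ball.inter
    (isOpen_lt (continuous_const.sub (continuous_const.inner continuous_id)).norm
      continuous_const).measurableSet

theorem carleson_of_integral_bound_general {n : ℕ} (p q : ℝ) (hp : 0 < p) (hq : 0 < q)
    (μ : Measure (EuclideanSpace ℂ (Fin n)))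
    (hμ : ∃ M : ℝ, ∀ z ∈ ball (0 : EuclideanSpace ℂ (Fin n)) 1,
      (∫⁻ ω in ball (0 : EuclideanSpace ℂ (Fin n)) 1,
          ENNReal.ofReal ((1 - ‖z‖ ^ 2) ^ ((n : ℝ) * q) /
            ‖1 - (inner ℂ ω z : ℂ)‖ ^ ((n : ℝ) * (p + q))) ∂μ)
        ≤ ENNReal.ofReal M) :
    ∃ C : ℝ, ∀ ζ ∈ sphere (0 : EuclideanSpace ℂ (Fin n)) 1, ∀ r : ℝ, 0 < r → r < 1 →
      μ (carlesonTube ζ r) ≤ ENNReal.ofReal (C * r ^ ((n : ℝ) * p)) := by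
  obtain ⟨M, hM⟩ := hμ
  refine ⟨M * 2 ^ ((n : ℝ) * (p + q)), fun ζ hζ r hr hr1 => ?_⟩
  have hζ1 : ‖ζ‖ = 1 := by simpa using hζ
  have hz : ((1 - r : ℝ) : ℂ) • ζ ∈ ball (0 : EuclideanSpace ℂ (Fin n)) 1 := by
    rw [mem_ball_zero_iff, norm_smul, Complex.norm_real, Real.norm_of_nonneg (by linarith), hζ1]
    linarith
  rw [mul_assoc]
  refine measure_le_ofReal_mul_of_inv_le_of_setLIntegral_le (measurableSet_carlesonTube ζ r)
    (carlesonTube_subset_ball ζ r) (by positivity) (fun ω hω => ?_) (hM _ hz)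
  rw [mul_add]
  exact inv_two_rpow_mul_rpow_le_kernel (by positivity) (by positivity) hr hr1.le hζ1.le
    (mem_ball_zero_iff.mp hω.1) hω.2

/-- If `sup_{z∈𝔹ₙ} ∫_{𝔹ₙ} (1-|z|²)^{nq} / |1-⟨z,ω⟩|^{n(p+q)} dμ(ω) < ∞`, then `μ` is a
`p`-Carleson measure: `μ(Q_r(ζ)) ≤ C r^{np}` for all `ζ ∈ 𝕊ₙ` and `0 < r < 1`. -/
theorem carleson_of_integral_bound {n : ℕ} (hn : 0 < n) (p q : ℝ) (hp : 0 < p) (hq : 0 < q)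
    (μ : Measure (EuclideanSpace ℂ (Fin n)))
    (hμ : ∃ M : ℝ, ∀ z ∈ ball (0 : EuclideanSpace ℂ (Fin n)) 1,
      (∫⁻ ω in ball (0 : EuclideanSpace ℂ (Fin n)) 1,
          ENNReal.ofReal ((1 - ‖z‖ ^ 2) ^ ((n : ℝ) * q) /
            ‖1 - (inner ℂ ω z : ℂ)‖ ^ ((n : ℝ) * (p + q))) ∂μ)
        ≤ ENNReal.ofReal M) :
    ∃ C : ℝ, ∀ ζ ∈ sphere (0 : EuclideanSpace ℂ (Fin n)) 1, ∀ r : ℝ, 0 < r → r < 1 →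
      μ (carlesonTube ζ r) ≤ ENNReal.ofReal (C * r ^ ((n : ℝ) * p)) :=
  carleson_of_integral_bound_general p q hp hq μ hμ
end
end

section
/- For z, ω in the closed unit ball of ℂⁿ, the 'square-root triangle inequality' holds: |1 - ⟨ω,z⟩|^{1/2} ≥ |1 - ⟨z,ζ⟩|^{1/2} - |1 - ⟨ω,ζ⟩|^{1/2} for every ζ on the unit sphere; equivalently, d(z,w) = |1 - ⟨z,w⟩|^{1/2} satisfies the triangle inequality on the closed unit ball. -/
/-!
Fix `u` in the closed unit ball. The Hermitian form `B(x,y) = ⟪x,y⟫ - ⟪x,u⟫⟪u,y⟫` is positive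
semidefinite, so Cauchy–Schwarz for `B` bounds `|B(x,y)|²` by
`(1 - |⟪x,u⟫|²)(1 - |⟪u,y⟫|²) ≤ 4 |1 - ⟪x,u⟫| |1 - ⟪u,y⟫|`. The triangle inequality for `d` then
follows from the identity `1 - ⟪x,y⟫ = (1 - ⟪x,u⟫) + ⟪x,u⟫(1 - ⟪u,y⟫) - B(x,y)`.
-/

open Metric RCLike
open scoped InnerProductSpace

section

variable {𝕜 E : Type*} [RCLike 𝕜] [SeminormedAddCommGroup E] [InnerProductSpace 𝕜 E]

lemma one_sub_norm_sq_le_two_mul_norm_one_sub (c : 𝕜) : 1 - ‖c‖ ^ 2 ≤ 2 * ‖1 - c‖ := by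
  have h : 1 - ‖c‖ ≤ ‖1 - c‖ := by simpa using norm_sub_norm_le (1 : 𝕜) c
  nlinarith [sq_nonneg (1 - ‖c‖)]

lemma norm_inner_le_one {x y : E} (hx : ‖x‖ ≤ 1) (hy : ‖y‖ ≤ 1) : ‖⟪x, y⟫_𝕜‖ ≤ 1 :=
  (norm_inner_le_norm x y).trans (mul_le_one₀ hx (norm_nonneg y) hy)

lemma norm_inner_le_of_norm_le_one {u : E} (hu : ‖u‖ ≤ 1) (x : E) : ‖⟪x, u⟫_𝕜‖ ≤ ‖x‖ :=
  (norm_inner_le_norm x u).trans (mul_le_of_le_one_right (norm_nonneg x) hu)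

lemma re_inner_self_sub_inner_mul_inner (u x : E) :
    re (⟪x, x⟫_𝕜 - ⟪x, u⟫_𝕜 * ⟪u, x⟫_𝕜) = ‖x‖ ^ 2 - ‖⟪x, u⟫_𝕜‖ ^ 2 := by
  rw [map_sub, inner_self_eq_norm_sq, ← inner_conj_symm u x, mul_conj, ← ofReal_pow, ofReal_re]

variable (𝕜) in
abbrev deflatedInnerCore {u : E} (hu : ‖u‖ ≤ 1) : PreInnerProductSpace.Core 𝕜 E where
  inner x y := ⟪x, y⟫_𝕜 - ⟪x, u⟫_𝕜 * ⟪u, y⟫_𝕜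
  conj_inner_symm x y := by
    simp only [map_sub, map_mul, inner_conj_symm]
    ring
  re_inner_nonneg x := by
    rw [re_inner_self_sub_inner_mul_inner, sub_nonneg]
    exact pow_le_pow_left₀ (norm_nonneg _) (norm_inner_le_of_norm_le_one hu x) 2
  add_left x y z := by
    simp only [inner_add_left]
    ring
  smul_left x y r := by
    simp only [inner_smul_left]
    ring

lemma norm_inner_sub_inner_mul_inner_sq_le {u : E} (hu : ‖u‖ ≤ 1) (x y : E) :
    ‖⟪x, y⟫_𝕜 - ⟪x, u⟫_𝕜 * ⟪u, y⟫_𝕜‖ ^ 2 ≤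
      (‖x‖ ^ 2 - ‖⟪x, u⟫_𝕜‖ ^ 2) * (‖y‖ ^ 2 - ‖⟪u, y⟫_𝕜‖ ^ 2) := by
  have h := InnerProductSpace.Core.inner_mul_inner_self_le (c := deflatedInnerCore 𝕜 hu) x y
  rw [← (deflatedInnerCore 𝕜 hu).conj_inner_symm y x, norm_conj, ← sq] at h
  change _ * _ ≤ re (⟪x, x⟫_𝕜 - ⟪x, u⟫_𝕜 * ⟪u, x⟫_𝕜) * re (⟪y, y⟫_𝕜 - ⟪y, u⟫_𝕜 * ⟪u, y⟫_𝕜) at h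
  rwa [re_inner_self_sub_inner_mul_inner, re_inner_self_sub_inner_mul_inner,
    norm_inner_symm y u] at h

variable {x y u : E}

lemma norm_inner_sub_inner_mul_inner_le (hx : ‖x‖ ≤ 1) (hy : ‖y‖ ≤ 1) (hu : ‖u‖ ≤ 1) :
    ‖⟪x, y⟫_𝕜 - ⟪x, u⟫_𝕜 * ⟪u, y⟫_𝕜‖ ≤ 2 * √‖1 - ⟪x, u⟫_𝕜‖ * √‖1 - ⟪u, y⟫_𝕜‖ := by
  have hxu : ‖x‖ ^ 2 - ‖⟪x, u⟫_𝕜‖ ^ 2 ≤ 2 * ‖1 - ⟪x, u⟫_𝕜‖ := by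
    nlinarith [one_sub_norm_sq_le_two_mul_norm_one_sub ⟪x, u⟫_𝕜, norm_nonneg x]
  have huy : ‖y‖ ^ 2 - ‖⟪u, y⟫_𝕜‖ ^ 2 ≤ 2 * ‖1 - ⟪u, y⟫_𝕜‖ := by
    nlinarith [one_sub_norm_sq_le_two_mul_norm_one_sub ⟪u, y⟫_𝕜, norm_nonneg y]
  have huy₀ : 0 ≤ ‖y‖ ^ 2 - ‖⟪u, y⟫_𝕜‖ ^ 2 := by
    rw [norm_inner_symm, sub_nonneg]
    exact pow_le_pow_left₀ (norm_nonneg _) (norm_inner_le_of_norm_le_one hu y) 2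
  refine (pow_le_pow_iff_left₀ (norm_nonneg _) (by positivity) two_ne_zero).1 ?_
  calc ‖⟪x, y⟫_𝕜 - ⟪x, u⟫_𝕜 * ⟪u, y⟫_𝕜‖ ^ 2
      ≤ (‖x‖ ^ 2 - ‖⟪x, u⟫_𝕜‖ ^ 2) * (‖y‖ ^ 2 - ‖⟪u, y⟫_𝕜‖ ^ 2) :=
        norm_inner_sub_inner_mul_inner_sq_le hu x y
    _ ≤ (2 * ‖1 - ⟪x, u⟫_𝕜‖) * (2 * ‖1 - ⟪u, y⟫_𝕜‖) :=
        mul_le_mul hxu huy huy₀ (by positivity)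
    _ = (2 * √‖1 - ⟪x, u⟫_𝕜‖ * √‖1 - ⟪u, y⟫_𝕜‖) ^ 2 := by
        rw [mul_pow, mul_pow, Real.sq_sqrt (norm_nonneg _), Real.sq_sqrt (norm_nonneg _)]
        ring

lemma norm_one_sub_inner_le_sq (hx : ‖x‖ ≤ 1) (hy : ‖y‖ ≤ 1) (hu : ‖u‖ ≤ 1) :
    ‖1 - ⟪x, y⟫_𝕜‖ ≤ (√‖1 - ⟪x, u⟫_𝕜‖ + √‖1 - ⟪u, y⟫_𝕜‖) ^ 2 := by
  have hsplit : 1 - ⟪x, y⟫_𝕜 =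
      (1 - ⟪x, u⟫_𝕜) + ⟪x, u⟫_𝕜 * (1 - ⟪u, y⟫_𝕜) - (⟪x, y⟫_𝕜 - ⟪x, u⟫_𝕜 * ⟪u, y⟫_𝕜) := by ring
  have hmid : ‖⟪x, u⟫_𝕜 * (1 - ⟪u, y⟫_𝕜)‖ ≤ ‖1 - ⟪u, y⟫_𝕜‖ := by
    rw [norm_mul]
    exact mul_le_of_le_one_left (norm_nonneg _) (norm_inner_le_one hx hu)
  calc ‖1 - ⟪x, y⟫_𝕜‖
      ≤ ‖1 - ⟪x, u⟫_𝕜‖ + ‖⟪x, u⟫_𝕜 * (1 - ⟪u, y⟫_𝕜)‖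
          + ‖⟪x, y⟫_𝕜 - ⟪x, u⟫_𝕜 * ⟪u, y⟫_𝕜‖ := by
        rw [hsplit]
        exact (norm_sub_le _ _).trans (add_le_add_left (norm_add_le _ _) _)
    _ ≤ ‖1 - ⟪x, u⟫_𝕜‖ + ‖1 - ⟪u, y⟫_𝕜‖ + 2 * √‖1 - ⟪x, u⟫_𝕜‖ * √‖1 - ⟪u, y⟫_𝕜‖ := by
        gcongr
        exact norm_inner_sub_inner_mul_inner_le hx hy hu
    _ = (√‖1 - ⟪x, u⟫_𝕜‖ + √‖1 - ⟪u, y⟫_𝕜‖) ^ 2 := by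
        rw [add_sq, Real.sq_sqrt (norm_nonneg _), Real.sq_sqrt (norm_nonneg _)]
        ring

lemma sqrt_norm_one_sub_inner_le (hx : ‖x‖ ≤ 1) (hy : ‖y‖ ≤ 1) (hu : ‖u‖ ≤ 1) :
    √‖1 - ⟪x, y⟫_𝕜‖ ≤ √‖1 - ⟪x, u⟫_𝕜‖ + √‖1 - ⟪u, y⟫_𝕜‖ :=
  (Real.sqrt_le_sqrt (norm_one_sub_inner_le_sq hx hy hu)).trans_eq (Real.sqrt_sq (by positivity))

end

/-- The non-isotropic pseudo-metric `d(z,w) = |1 - ⟨z,w⟩|^{1/2}` satisfies the triangle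
inequality on the closed unit ball of `ℂⁿ`; in particular, for `z, ω` in the closed ball
and `ζ` on the unit sphere, `|1-⟨ω,z⟩|^{1/2} ≥ |1-⟨z,ζ⟩|^{1/2} - |1-⟨ω,ζ⟩|^{1/2}`. -/
theorem nonisotropic_sqrt_triangle {n : ℕ}
    (z w u : EuclideanSpace ℂ (Fin n))
    (hz : z ∈ closedBall (0 : EuclideanSpace ℂ (Fin n)) 1)
    (hw : w ∈ closedBall (0 : EuclideanSpace ℂ (Fin n)) 1)
    (hu : u ∈ closedBall (0 : EuclideanSpace ℂ (Fin n)) 1) :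
    Real.sqrt (‖1 - (inner ℂ w z : ℂ)‖) ≤
      Real.sqrt (‖1 - (inner ℂ u z : ℂ)‖) +
        Real.sqrt (‖1 - (inner ℂ w u : ℂ)‖) := by
  rw [mem_closedBall_zero_iff] at hz hw hu
  rw [add_comm]
  exact sqrt_norm_one_sub_inner_le hw hz hu
end

section
/- For f holomorphic on 𝔹ₙ and z ∈ 𝔹ₙ, the identity |z|² |∇̃f(z)|² = (1-|z|²) [ (1-|z|²)|Rf(z)|² + Σ_{i<j} |T_{i,j}f(z)|² ] holds, where T_{i,j}f = conj(z_j) ∂f/∂z_i − conj(z_i) ∂f/∂z_j, Rf(z) = Σ z_k ∂f/∂z_k, and |∇̃f(z)|² = (1-|z|²)(|∇f(z)|² − |Rf(z)|²). -/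
/-!
Only linear algebra at the point `z` is involved: writing `a = ∇f(z)`, Lagrange's identity
`Σ_{i<j} |z̄_j a_i - z̄_i a_j|² = |z|²|a|² - |Σ_k z_k a_k|²` turns both sides into
`(1 - |z|²) |z|² (|a|² - |Rf(z)|²)`.
-/

open Metric Finset ComplexConjugate

theorem Finset.sum_sum_eq_two_nsmul_sum_filter_lt {ι M : Type*} [Fintype ι] [LinearOrder ι]
    [AddCommMonoid M] (F : ι → ι → M) (hsymm : ∀ i j, F i j = F j i)
    (hdiag : ∀ i, F i i = 0) :
    ∑ i, ∑ j, F i j = 2 • ∑ p ∈ univ.filter (fun p : ι × ι => p.1 < p.2), F p.1 p.2 := by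
  have hsplit : ∀ p : ι × ι, F p.1 p.2 =
      (if p.1 < p.2 then F p.1 p.2 else 0) + (if p.2 < p.1 then F p.2 p.1 else 0) := by
    rintro ⟨i, j⟩
    rcases lt_trichotomy i j with h | rfl | h
    · simp [h, h.not_gt]
    · simp [hdiag]
    · simp [h, h.not_gt, hsymm i j]
  have hswap : ∑ p : ι × ι, (if p.2 < p.1 then F p.2 p.1 else 0) =
      ∑ p : ι × ι, (if p.1 < p.2 then F p.1 p.2 else 0) :=
    Fintype.sum_equiv (Equiv.prodComm ι ι) _ _ fun _ => rfl
  rw [← Fintype.sum_prod_type', Fintype.sum_congr _ _ hsplit, sum_add_distrib, hswap,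
    ← two_nsmul, sum_ite, sum_const_zero, add_zero]

theorem sum_sum_norm_sq_conj_mul_sub {ι 𝕜 : Type*} [Fintype ι] [RCLike 𝕜] (z a : ι → 𝕜) :
    ∑ i, ∑ j, ‖conj (z j) * a i - conj (z i) * a j‖ ^ 2 =
      2 * ((∑ i, ‖z i‖ ^ 2) * (∑ i, ‖a i‖ ^ 2) - ‖∑ i, z i * a i‖ ^ 2) := by
  have hcross : ∑ i, ∑ j, RCLike.re (conj (z i) * a j * conj (conj (z j) * a i)) =
      ‖∑ i, z i * a i‖ ^ 2 := by
    have hterm : ∀ i j,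
        conj (z i) * a j * conj (conj (z j) * a i) = z j * a j * conj (z i * a i) := by
      intro i j
      simp only [map_mul, RCLike.conj_conj]
      ring
    simp only [hterm, ← sum_mul, ← mul_sum, ← map_sum, RCLike.mul_conj, ← RCLike.ofReal_pow,
      RCLike.ofReal_re]
  simp only [@norm_sub_sq 𝕜, RCLike.inner_apply, sum_add_distrib, sum_sub_distrib, norm_mul,
    RCLike.norm_conj, mul_pow, ← mul_sum, ← sum_mul, hcross]
  ring

theorem sum_filter_lt_norm_sq_conj_mul_sub {ι 𝕜 : Type*} [Fintype ι] [LinearOrder ι]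
    [RCLike 𝕜] (z a : ι → 𝕜) :
    ∑ p ∈ univ.filter (fun p : ι × ι => p.1 < p.2),
        ‖conj (z p.2) * a p.1 - conj (z p.1) * a p.2‖ ^ 2 =
      (∑ i, ‖z i‖ ^ 2) * (∑ i, ‖a i‖ ^ 2) - ‖∑ i, z i * a i‖ ^ 2 := by
  have hpairs := sum_sum_eq_two_nsmul_sum_filter_lt
    (fun i j => ‖conj (z j) * a i - conj (z i) * a j‖ ^ 2)
    (fun i j => by rw [← norm_neg, neg_sub]) (fun i => by simp)
  rw [sum_sum_norm_sq_conj_mul_sub, two_nsmul, ← two_mul] at hpairs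
  exact (mul_left_cancel₀ two_ne_zero hpairs).symm

theorem norm_sq_invGradient_identity_general {n : ℕ}
    (f : EuclideanSpace ℂ (Fin n) → ℂ)
    (z : EuclideanSpace ℂ (Fin n)) :
    ‖z‖ ^ 2 * ((1 - ‖z‖ ^ 2) *
        ((∑ j : Fin n, ‖fderiv ℂ f z (EuclideanSpace.single j 1)‖ ^ 2) -
          ‖∑ k : Fin n, z k * fderiv ℂ f z (EuclideanSpace.single k 1)‖ ^ 2)) =
      (1 - ‖z‖ ^ 2) *
        ((1 - ‖z‖ ^ 2) * ‖∑ k : Fin n, z k * fderiv ℂ f z (EuclideanSpace.single k 1)‖ ^ 2 +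
          ∑ p ∈ Finset.univ.filter (fun p : Fin n × Fin n => p.1 < p.2),
            ‖(starRingEnd ℂ) (z p.2) * fderiv ℂ f z (EuclideanSpace.single p.1 1) -
              (starRingEnd ℂ) (z p.1) * fderiv ℂ f z (EuclideanSpace.single p.2 1)‖ ^ 2) := by
  rw [EuclideanSpace.norm_sq_eq,
    sum_filter_lt_norm_sq_conj_mul_sub z (fun k => fderiv ℂ f z (EuclideanSpace.single k 1))]
  ring

/-- For `f` holomorphic on `𝔹ₙ` and `z ∈ 𝔹ₙ`, with `∂_j f(z)` the complex partial
derivatives, `Rf(z) = Σ z_k ∂_k f(z)` the radial derivative,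
`T_{ij}f = conj(z_j)∂_i f − conj(z_i)∂_j f` the tangential derivatives, and the invariant
gradient given by `|∇̃f(z)|² = (1-|z|²)(|∇f(z)|² − |Rf(z)|²)`, one has the identity
`|z|²|∇̃f(z)|² = (1-|z|²)[(1-|z|²)|Rf(z)|² + Σ_{i<j}|T_{ij}f(z)|²]`. -/
theorem norm_sq_invGradient_identity {n : ℕ}
    (f : EuclideanSpace ℂ (Fin n) → ℂ)
    (hf : DifferentiableOn ℂ f (ball (0 : EuclideanSpace ℂ (Fin n)) 1))
    (z : EuclideanSpace ℂ (Fin n)) (hz : z ∈ ball (0 : EuclideanSpace ℂ (Fin n)) 1) :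
    ‖z‖ ^ 2 * ((1 - ‖z‖ ^ 2) *
        ((∑ j : Fin n, ‖fderiv ℂ f z (EuclideanSpace.single j 1)‖ ^ 2) -
          ‖∑ k : Fin n, z k * fderiv ℂ f z (EuclideanSpace.single k 1)‖ ^ 2)) =
      (1 - ‖z‖ ^ 2) *
        ((1 - ‖z‖ ^ 2) * ‖∑ k : Fin n, z k * fderiv ℂ f z (EuclideanSpace.single k 1)‖ ^ 2 +
          ∑ p ∈ Finset.univ.filter (fun p : Fin n × Fin n => p.1 < p.2),
            ‖(starRingEnd ℂ) (z p.2) * fderiv ℂ f z (EuclideanSpace.single p.1 1) -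
              (starRingEnd ℂ) (z p.1) * fderiv ℂ f z (EuclideanSpace.single p.2 1)‖ ^ 2) :=
  norm_sq_invGradient_identity_general f z
end
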